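/- In the NP-hardness reduction from weighted set cover, if K̄ is any feasible feedback matrix (every state lies in an SCC with a feedback edge in the closed-loop digraph), then the collection S(K̄) = {S_{j−N} : K̄_{(r+1)j} = ⋆} of sets whose outputs are fed to input u_{r+1} covers the universe U = {1,…,N}. -/

import Mathlib

/-!
Suppose no set containing `j` is fed back to `u_{r+1}`. Then, apart from `x_j` itself, the
vertices reachable from the element node `x_j` are the set nodes `x_{N+k}` with `j ∈ S_k`, their
outputs `y_k` and their own inputs `u_k`: this set is closed under the edges, because the hub, the
only way back to an element node, is entered only through `u_{r+1}`. Hence `x_j` is alone in its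
strongly connected component, which therefore contains no input, contradicting feasibility.
-/

/-- Mutual reachability under the relation `R`. -/
def mreach {V : Type*} (R : V → V → Prop) (a b : V) : Prop :=
  Relation.ReflTransGen R a b ∧ Relation.ReflTransGen R b a

/-- The states of the structured system built from a weighted set cover
instance with universe `Fin N` and sets `S_1, …, S_r`: the `N` element nodes,
the `r` set nodes, and the hub node `x_{N+r+1}`. -/
abbrev RedState (N r : ℕ) := Fin N ⊕ Fin r ⊕ Unit

/-- Vertices of the closed-loop digraph of the reduction: states, the `r+1`
dedicated inputs and the `r` dedicated outputs. -/
abbrev RedV (N r : ℕ) := RedState N r ⊕ Fin (r + 1) ⊕ Fin r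

/-- Edge relation of the closed-loop digraph of the NP-hardness reduction
from weighted set cover: every state has a self-loop; the hub feeds every
element node; element node `j` feeds set node `k` iff `j ∈ S k`; input `u_k`
(`k < r`) actuates set node `k` and input `u_{r+1}` actuates the hub; output
`y_k` senses set node `k`; and the feedback edges are given by `K` (pairs
`(output, input)`). -/
def redEdge {N r : ℕ} (S : Fin r → Finset (Fin N))
    (K : Finset (Fin r × Fin (r + 1))) (v w : RedV N r) : Prop :=
  (∃ x : RedState N r, v = Sum.inl x ∧ w = Sum.inl x) ∨
  (∃ j : Fin N, v = Sum.inl (Sum.inr (Sum.inr ())) ∧ w = Sum.inl (Sum.inl j)) ∨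
  (∃ (j : Fin N) (k : Fin r), j ∈ S k ∧
    v = Sum.inl (Sum.inl j) ∧ w = Sum.inl (Sum.inr (Sum.inl k))) ∨
  (∃ k : Fin r, v = Sum.inr (Sum.inl k.castSucc) ∧
    w = Sum.inl (Sum.inr (Sum.inl k))) ∨
  (v = Sum.inr (Sum.inl (Fin.last r)) ∧ w = Sum.inl (Sum.inr (Sum.inr ()))) ∨
  (∃ k : Fin r, v = Sum.inl (Sum.inr (Sum.inl k)) ∧ w = Sum.inr (Sum.inr k)) ∨
  (∃ e ∈ K, v = Sum.inr (Sum.inr e.1) ∧ w = Sum.inr (Sum.inl e.2))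

/-- Feasibility of a feedback matrix `K` in the reduction: every state lies
in an SCC of the closed-loop digraph containing both endpoints of some
feedback edge of `K`. -/
def redFeasible {N r : ℕ} (S : Fin r → Finset (Fin N))
    (K : Finset (Fin r × Fin (r + 1))) : Prop :=
  ∀ x : RedState N r, ∃ e ∈ K,
    mreach (redEdge S K) (Sum.inl x) (Sum.inr (Sum.inr e.1)) ∧
    mreach (redEdge S K) (Sum.inl x) (Sum.inr (Sum.inl e.2))

theorem Relation.ReflTransGen.mem_of_closed {α : Type*} {R : α → α → Prop} {D : Set α}
    (hD : ∀ a b, R a b → a ∈ D → b ∈ D) {a b : α} (h : Relation.ReflTransGen R a b)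
    (ha : a ∈ D) : b ∈ D := by
  induction h with
  | refl => exact ha
  | tail _ hbc ih => exact hD _ _ hbc ih

theorem eq_of_mreach_of_closed {α : Type*} {R : α → α → Prop} {D : Set α}
    (hD : ∀ a b, R a b → a ∈ D → b ∈ D) {a b : α} (hsucc : ∀ c, R a c → c = a ∨ c ∈ D)
    (haD : a ∉ D) (hab : mreach R a b) : b = a := by
  have hclosed : ∀ c d, R c d → c ∈ insert a D → d ∈ insert a D := by
    rintro c d hcd (rfl | hc)
    · exact hsucc d hcd
    · exact Or.inr (hD c d hcd hc)
  rcases hab.1.mem_of_closed hclosed (Set.mem_insert a D) with hb | hb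
  · exact hb
  · exact absurd (hab.2.mem_of_closed hD hb) haD

section
variable {N r : ℕ} (S : Fin r → Finset (Fin N)) (K : Finset (Fin r × Fin (r + 1)))

theorem redEdge_element_iff (j : Fin N) (w : RedV N r) :
    redEdge S K (.inl (.inl j)) w ↔
      w = .inl (.inl j) ∨ ∃ k, j ∈ S k ∧ w = .inl (.inr (.inl k)) := by
  simp [redEdge, eq_comm]

theorem redEdge_setNode_iff (k : Fin r) (w : RedV N r) :
    redEdge S K (.inl (.inr (.inl k))) w ↔ w = .inl (.inr (.inl k)) ∨ w = .inr (.inr k) := by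
  simp [redEdge, eq_comm]

theorem redEdge_output_iff (k : Fin r) (w : RedV N r) :
    redEdge S K (.inr (.inr k)) w ↔ ∃ i, (k, i) ∈ K ∧ w = .inr (.inl i) := by
  simp [redEdge, eq_comm]

theorem redEdge_input_castSucc_iff (k : Fin r) (w : RedV N r) :
    redEdge S K (.inr (.inl k.castSucc)) w ↔ w = .inl (.inr (.inl k)) := by
  simp [redEdge, eq_comm, (Fin.castSucc_lt_last k).ne]

/-- Everything other than `x_j` that is reachable from the element node `x_j` as long as no set
containing `j` is fed back to the hub input `u_{r+1}`. -/
def downstream (j : Fin N) : Set (RedV N r) :=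
  {v | ∃ k, j ∈ S k ∧
    (v = .inl (.inr (.inl k)) ∨ v = .inr (.inr k) ∨ v = .inr (.inl k.castSucc))}

variable {S K} in
theorem downstream_closed (hK : ∀ e ∈ K, e.2 = Fin.castSucc e.1 ∨ e.2 = Fin.last r)
    {j : Fin N} (hj : ∀ k, (k, Fin.last r) ∈ K → j ∉ S k) (v w : RedV N r)
    (hvw : redEdge S K v w) (hv : v ∈ downstream S j) : w ∈ downstream S j := by
  obtain ⟨k, hjk, rfl | rfl | rfl⟩ := hv
  · rcases (redEdge_setNode_iff S K k w).1 hvw with rfl | rfl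
    · exact ⟨k, hjk, Or.inl rfl⟩
    · exact ⟨k, hjk, Or.inr (Or.inl rfl)⟩
  · obtain ⟨i, hki, rfl⟩ := (redEdge_output_iff S K k w).1 hvw
    rcases hK _ hki with hi | hi
    · exact ⟨k, hjk, Or.inr (Or.inr (congrArg _ (congrArg _ hi)))⟩
    · exact absurd hjk (hj k (hi ▸ hki))
  · rw [(redEdge_input_castSucc_iff S K k w).1 hvw]
    exact ⟨k, hjk, Or.inl rfl⟩

theorem eq_or_mem_downstream_of_redEdge_element (j : Fin N) (w : RedV N r)
    (h : redEdge S K (.inl (.inl j)) w) :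
    w = .inl (.inl j) ∨ w ∈ downstream S j := by
  rcases (redEdge_element_iff S K j w).1 h with rfl | ⟨k, hjk, rfl⟩
  · exact Or.inl rfl
  · exact Or.inr ⟨k, hjk, Or.inl rfl⟩

theorem element_not_mem_downstream (j : Fin N) : (.inl (.inl j) : RedV N r) ∉ downstream S j := by
  simp [downstream]

end

/-- In the NP-hardness reduction from weighted set cover, if
`K̄` is any feasible feedback matrix (every state lies in an SCC with a
feedback edge in the closed-loop digraph), where the feasible feedback edges
are `(y_j, u_j)` and `(y_j, u_{r+1})`, then the collection
`S(K̄) = {S_j : K̄_{(r+1)j} = ⋆}` of sets whose outputs are fed to input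
`u_{r+1}` covers the universe `{1, …, N}`. -/
theorem stmt_17 {N r : ℕ} (S : Fin r → Finset (Fin N))
    (K : Finset (Fin r × Fin (r + 1)))
    (hKfeasEdges : ∀ e ∈ K, e.2 = Fin.castSucc e.1 ∨ e.2 = Fin.last r)
    (hK : redFeasible S K) :
    ∀ j : Fin N, ∃ k : Fin r, (k, Fin.last r) ∈ K ∧ j ∈ S k := by
  intro j
  by_contra! hj
  obtain ⟨e, -, -, hu⟩ := hK (.inl j)
  exact Sum.inr_ne_inl <| eq_of_mreach_of_closed (downstream_closed hKfeasEdges hj)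
    (eq_or_mem_downstream_of_redEdge_element S K j) (element_not_mem_downstream S j) hu
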